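/- arXiv:1504.02610 — 3 statements merged into one kernel-verified Lean document; each statement's English description precedes it below -/
import Mathlib

section
/- Let s be a non-glue state of L^{r0} (i.e., s ∈ S_{L^{r0}} \ S_{K^{r0}}) and t any state of L^{r1}. If there is no injective LTS morphism from the context LTS of t in L^{r1} to the context LTS of s in L^{r0} mapping t to s, then there exist no matches m0 : L^{r0} → G and m1 : L^{r1} → G on any LTS G with m0(s) = m1(t). -/
/-- A Labelled Transition System: a set of states and a set of labelled
transitions between them. Its action set is derived from the transitions. -/
structure LTS (σ α : Type) where
  states : Set σ
  trans : Set (σ × α × σ)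
  src_mem : ∀ t ∈ trans, t.1 ∈ states
  tgt_mem : ∀ t ∈ trans, t.2.2 ∈ states

namespace LTS

variable {σ α : Type}

/-- The set of labels occurring in transitions of an LTS. -/
def actions (G : LTS σ α) : Set α := {a | ∃ s s', (s, a, s') ∈ G.trans}

/-- An LTS morphism: a pair of maps, on states and on transitions,
preserving sources, targets and labels. -/
structure Morphism (G0 G1 : LTS σ α) where
  fS : σ → σ
  fT : σ × α × σ → σ × α × σ
  maps_states : ∀ s ∈ G0.states, fS s ∈ G1.states
  maps_trans : ∀ t ∈ G0.trans, fT t ∈ G1.trans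
  compat : ∀ t ∈ G0.trans, fT t = (fS t.1, t.2.1, fS t.2.2)

/-- An injective LTS morphism: both components injective (on the states,
resp. transitions, of the source LTS). -/
def Morphism.Injective {G0 G1 : LTS σ α} (f : Morphism G0 G1) : Prop :=
  Set.InjOn f.fS G0.states ∧ Set.InjOn f.fT G0.trans

/-- A bijective LTS morphism (isomorphism): both components are bijections. -/
def Morphism.Bijective {G0 G1 : LTS σ α} (f : Morphism G0 G1) : Prop :=
  Set.BijOn f.fS G0.states G1.states ∧ Set.BijOn f.fT G0.trans G1.trans

/-- Two LTSs are isomorphic iff there is a bijective morphism between them. -/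
def Isomorphic (G0 G1 : LTS σ α) : Prop :=
  ∃ f : Morphism G0 G1, f.Bijective

/-- Sub-LTS relation: existence of an LTS inclusion (a morphism whose
components are the identity). -/
def SubLTS (G0 G1 : LTS σ α) : Prop :=
  ∃ i : Morphism G0 G1, (∀ s ∈ G0.states, i.fS s = s) ∧ (∀ t ∈ G0.trans, i.fT t = t)

/-- Undirected adjacency in an LTS. -/
def Adj (G : LTS σ α) (s s' : σ) : Prop :=
  ∃ a, (s, a, s') ∈ G.trans ∨ (s', a, s) ∈ G.trans

/-- An LTS is weakly connected iff any two states are connected in the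
undirected version. -/
def WeaklyConnected (G : LTS σ α) : Prop :=
  ∀ s ∈ G.states, ∀ s' ∈ G.states, Relation.ReflTransGen G.Adj s s'

/-- The context LTS of a state `p`: `p`, its neighbours, and all
transitions of `G` incident to `p`. -/
def contextLTS (G : LTS σ α) (p : σ) : LTS σ α where
  states := {p} ∪ {p' | ∃ a, (p, a, p') ∈ G.trans ∨ (p', a, p) ∈ G.trans}
  trans := {t ∈ G.trans | t.1 = p ∨ t.2.2 = p}
  src_mem := by
    rintro ⟨s, a, s'⟩ ⟨ht, hp | hp⟩
    · simp only [Set.mem_union, Set.mem_setOf_eq, Set.mem_singleton_iff]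
      exact Or.inl hp
    · simp only [Set.mem_union, Set.mem_setOf_eq, Set.mem_singleton_iff]
      exact Or.inr ⟨a, Or.inr (hp ▸ ht)⟩
  tgt_mem := by
    rintro ⟨s, a, s'⟩ ⟨ht, hp | hp⟩
    · simp only [Set.mem_union, Set.mem_setOf_eq, Set.mem_singleton_iff]
      exact Or.inr ⟨a, Or.inl (hp ▸ ht)⟩
    · simp only [Set.mem_union, Set.mem_setOf_eq, Set.mem_singleton_iff]
      exact Or.inl hp

/-- A transformation rule `L ← K → R`: `K → L` is an inclusion and
`K → R` an injective morphism; `L` and `R` are weakly connected. -/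
structure Rule (σ α : Type) where
  L : LTS σ α
  K : LTS σ α
  R : LTS σ α
  incl_states : K.states ⊆ L.states
  incl_trans : K.trans ⊆ L.trans
  g : Morphism K R
  g_inj : g.Injective
  L_conn : L.WeaklyConnected
  R_conn : R.WeaklyConnected

/-- A rule is well-specified: it does not replace a transition by an
identically-labelled transition between the same (glue) states, and it does
not delete a state without also deleting some transition connected to it. -/
def WellSpecified (r : Rule σ α) : Prop :=
  (∀ t ∈ r.L.trans, t ∉ r.K.trans → t.1 ∈ r.K.states → t.2.2 ∈ r.K.states →
    (r.g.fS t.1, t.2.1, r.g.fS t.2.2) ∉ r.R.trans) ∧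
  (∀ s ∈ r.L.states, s ∉ r.K.states →
    ∃ t ∈ r.L.trans, (t.1 = s ∨ t.2.2 = s) ∧ t ∉ r.K.trans)

/-- A match of a rule on an LTS `G`: an injective morphism `L → G`
satisfying the gluing (no dangling transitions) conditions. -/
def IsMatch (r : Rule σ α) {G : LTS σ α} (m : Morphism r.L G) : Prop :=
  m.Injective ∧
  ∀ s ∈ r.L.states, s ∉ r.K.states →
    (∀ a p, (m.fS s, a, p) ∈ G.trans →
      ∃ s' ∈ r.L.states, (s, a, s') ∈ r.L.trans ∧ m.fS s' = p) ∧
    (∀ a p, (p, a, m.fS s) ∈ G.trans →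
      ∃ s' ∈ r.L.states, (s', a, s) ∈ r.L.trans ∧ m.fS s' = p)

/-- Parallel independence: the intersection of the match images is contained
in the intersection of the interface images (on states and transitions). -/
def ParallelIndependent (r0 r1 : Rule σ α) {G : LTS σ α}
    (m0 : Morphism r0.L G) (m1 : Morphism r1.L G) : Prop :=
  (m0.fS '' r0.L.states ∩ m1.fS '' r1.L.states ⊆
     m0.fS '' r0.K.states ∩ m1.fS '' r1.K.states) ∧
  (m0.fT '' r0.L.trans ∩ m1.fT '' r1.L.trans ⊆
     m0.fT '' r0.K.trans ∩ m1.fT '' r1.K.trans)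

/-- `H` is the result of the direct transformation of `G` by rule `r` with
match `m` and comatch `m'`. -/
def IsDirectTransformation (r : Rule σ α) (G H : LTS σ α)
    (m : Morphism r.L G) (m' : Morphism r.R H) : Prop :=
  IsMatch r m ∧ m'.Injective ∧
  (∀ s ∈ r.K.states, m'.fS (r.g.fS s) = m.fS s) ∧
  H.states = (G.states \ m.fS '' (r.L.states \ r.K.states)) ∪
             m'.fS '' (r.R.states \ r.g.fS '' r.K.states) ∧
  H.trans = (G.trans \ m.fT '' (r.L.trans \ r.K.trans)) ∪
            m'.fT '' (r.R.trans \ r.g.fT '' r.K.trans)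

open Classical in
/-- The track morphism of a direct transformation, as a partial map on
states: states matched by interface states are tracked through the rule,
deleted states are undefined, untouched states are mapped to themselves. -/
noncomputable def track (r : Rule σ α) {G H : LTS σ α}
    (m : Morphism r.L G) (m' : Morphism r.R H) (s : σ) : Option σ :=
  if h : ∃ k ∈ r.K.states, m.fS k = s then some (m'.fS (r.g.fS h.choose))
  else if s ∈ m.fS '' r.L.states then none
  else if s ∈ G.states then some s else none

/-- Labels of transitions of `L` that are not in the interface `K`
(written A(L | K) in the paper). -/
def delLabels (r : Rule σ α) : Set α :=
  {a | ∃ t ∈ r.L.trans, t ∉ r.K.trans ∧ t.2.1 = a}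

/-- A partial LTS morphism: partial maps on states and transitions which,
wherever defined, preserve sources, targets and labels. -/
structure PartialMorphism (G0 G1 : LTS σ α) where
  fS : σ → Option σ
  fT : σ × α × σ → Option (σ × α × σ)
  maps_states : ∀ s ∈ G0.states, ∀ u, fS s = some u → u ∈ G1.states
  compat : ∀ t ∈ G0.trans, ∀ u, fT t = some u →
    u ∈ G1.trans ∧ fS t.1 = some u.1 ∧ fS t.2.2 = some u.2.2 ∧ u.2.1 = t.2.1

/-- Injectivity of a partial LTS morphism on its domain of definition. -/
def PartialMorphism.Injective {G0 G1 : LTS σ α} (f : PartialMorphism G0 G1) : Prop :=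
  (∀ s1 ∈ G0.states, ∀ s2 ∈ G0.states, f.fS s1 ≠ none → f.fS s1 = f.fS s2 → s1 = s2) ∧
  (∀ t1 ∈ G0.trans, ∀ t2 ∈ G0.trans, f.fT t1 ≠ none → f.fT t1 = f.fT t2 → t1 = t2)

end LTS


/-- Lemma 3 of the paper: if there is no injective morphism
from the context LTS of `t` to the context LTS of a non-glue state `s`
mapping `t` to `s`, then no pair of matches can identify `s` and `t`. -/
theorem no_common_match_of_no_context_morphism {σ α : Type}
    (r0 r1 : LTS.Rule σ α) (s t : σ)
    (hs : s ∈ r0.L.states) (hsK : s ∉ r0.K.states) (ht : t ∈ r1.L.states)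
    (h : ¬ ∃ f : LTS.Morphism (r1.L.contextLTS t) (r0.L.contextLTS s),
          f.Injective ∧ f.fS t = s) :
    ∀ (G : LTS σ α) (m0 : LTS.Morphism r0.L G) (m1 : LTS.Morphism r1.L G),
      LTS.IsMatch r0 m0 → LTS.IsMatch r1 m1 → m0.fS s ≠ m1.fS t := by
  classical
  intro G m0 m1 hm0 hm1 heq
  apply h
  obtain ⟨⟨hi0S, hi0T⟩, hglue0⟩ := hm0
  obtain ⟨⟨hi1S, hi1T⟩, _⟩ := hm1
  obtain ⟨hout, hin⟩ := hglue0 s hs hsK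
  -- context states of t are states of L1
  have hCstates : ∀ u ∈ (r1.L.contextLTS t).states, u ∈ r1.L.states := by
    rintro u (rfl | ⟨a, hT | hT⟩)
    · exact ht
    · exact r1.L.tgt_mem _ hT
    · exact r1.L.src_mem _ hT
  have hCtrans : ∀ τ ∈ (r1.L.contextLTS t).trans, τ ∈ r1.L.trans := fun τ hτ => hτ.1
  -- existence of state preimages
  have hexS : ∀ u ∈ (r1.L.contextLTS t).states,
      ∃ s', s' ∈ r0.L.states ∧ m0.fS s' = m1.fS u := by
    rintro u (rfl | ⟨a, hT | hT⟩)
    · exact ⟨s, hs, heq⟩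
    · have hG := m1.maps_trans _ hT
      rw [m1.compat _ hT] at hG
      rw [← heq] at hG
      obtain ⟨s', hs', _, hms'⟩ := hout a (m1.fS u) hG
      exact ⟨s', hs', hms'⟩
    · have hG := m1.maps_trans _ hT
      rw [m1.compat _ hT] at hG
      rw [← heq] at hG
      obtain ⟨s', hs', _, hms'⟩ := hin a (m1.fS u) hG
      exact ⟨s', hs', hms'⟩
  -- existence of transition preimages
  have hexT : ∀ τ ∈ (r1.L.contextLTS t).trans,
      ∃ τ', (τ' ∈ r0.L.trans ∧ (τ'.1 = s ∨ τ'.2.2 = s)) ∧ m0.fT τ' = m1.fT τ := by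
    rintro ⟨u, a, v⟩ ⟨hT, h1 | h2⟩
    · simp only at h1
      subst h1
      have hG := m1.maps_trans _ hT
      rw [m1.compat _ hT] at hG
      rw [← heq] at hG
      obtain ⟨s', hs', hts', hms'⟩ := hout a (m1.fS v) hG
      refine ⟨(s, a, s'), ⟨hts', Or.inl rfl⟩, ?_⟩
      rw [m0.compat _ hts', m1.compat _ hT, heq, hms']
    · simp only at h2
      subst h2
      have hG := m1.maps_trans _ hT
      rw [m1.compat _ hT] at hG
      rw [← heq] at hG
      obtain ⟨s', hs', hts', hms'⟩ := hin a (m1.fS u) hG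
      refine ⟨(s', a, s), ⟨hts', Or.inr rfl⟩, ?_⟩
      rw [m0.compat _ hts', m1.compat _ hT, heq, hms']
  -- definitions of the morphism components
  set fS : σ → σ := fun u =>
    if hu : ∃ s', s' ∈ r0.L.states ∧ m0.fS s' = m1.fS u then hu.choose else u with hfS_def
  set fT : σ × α × σ → σ × α × σ := fun τ =>
    if hτ : ∃ τ', (τ' ∈ r0.L.trans ∧ (τ'.1 = s ∨ τ'.2.2 = s)) ∧ m0.fT τ' = m1.fT τ
    then hτ.choose else τ with hfT_def
  have hfS_spec : ∀ u ∈ (r1.L.contextLTS t).states,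
      fS u ∈ r0.L.states ∧ m0.fS (fS u) = m1.fS u := by
    intro u hu
    have he := hexS u hu
    simp only [hfS_def, dif_pos he]
    exact he.choose_spec
  have hfT_spec : ∀ τ ∈ (r1.L.contextLTS t).trans,
      (fT τ ∈ r0.L.trans ∧ ((fT τ).1 = s ∨ (fT τ).2.2 = s)) ∧ m0.fT (fT τ) = m1.fT τ := by
    intro τ hτ
    have he := hexT τ hτ
    simp only [hfT_def, dif_pos he]
    exact he.choose_spec
  -- fS maps t to s
  have htC : t ∈ (r1.L.contextLTS t).states := Or.inl rfl
  have hfSt : fS t = s := by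
    obtain ⟨h1, h2⟩ := hfS_spec t htC
    exact hi0S h1 hs (h2.trans heq.symm)
  -- fS uniquely determined by its m0-image
  have hfS_eq : ∀ u ∈ (r1.L.contextLTS t).states, ∀ s', s' ∈ r0.L.states →
      m0.fS s' = m1.fS u → fS u = s' := by
    intro u hu s' hs' hms'
    obtain ⟨h1, h2⟩ := hfS_spec u hu
    exact hi0S h1 hs' (h2.trans hms'.symm)
  -- fS maps context states to context states
  have hmapsS : ∀ u ∈ (r1.L.contextLTS t).states, fS u ∈ (r0.L.contextLTS s).states := by
    rintro u hu
    rcases hu with rfl | ⟨a, hT | hT⟩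
    · rw [hfSt]; exact Or.inl rfl
    · have hG := m1.maps_trans _ hT
      rw [m1.compat _ hT] at hG
      rw [← heq] at hG
      obtain ⟨s', hs', hts', hms'⟩ := hout a (m1.fS u) hG
      have : fS u = s' := hfS_eq u (Or.inr ⟨a, Or.inl hT⟩) s' (r0.L.tgt_mem _ hts') hms'
      rw [this]
      exact Or.inr ⟨a, Or.inl hts'⟩
    · have hG := m1.maps_trans _ hT
      rw [m1.compat _ hT] at hG
      rw [← heq] at hG
      obtain ⟨s', hs', hts', hms'⟩ := hin a (m1.fS u) hG
      have : fS u = s' := hfS_eq u (Or.inr ⟨a, Or.inr hT⟩) s' (r0.L.src_mem _ hts') hms'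
      rw [this]
      exact Or.inr ⟨a, Or.inr hts'⟩
  refine ⟨⟨fS, fT, hmapsS, ?_, ?_⟩, ⟨?_, ?_⟩, hfSt⟩
  · -- maps_trans
    intro τ hτ
    obtain ⟨⟨h1, h2⟩, _⟩ := hfT_spec τ hτ
    exact ⟨h1, h2⟩
  · -- compat
    rintro ⟨u, a, v⟩ hτ
    obtain ⟨⟨h1, _⟩, h2⟩ := hfT_spec _ hτ
    have huC : u ∈ (r1.L.contextLTS t).states := (r1.L.contextLTS t).src_mem _ hτ
    have hvC : v ∈ (r1.L.contextLTS t).states := (r1.L.contextLTS t).tgt_mem _ hτ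
    have hc0 := m0.compat _ h1
    have hc1 := m1.compat _ (hCtrans _ hτ)
    rw [hc0, hc1] at h2
    have e1 : m0.fS (fT (u, a, v)).1 = m1.fS u := congrArg Prod.fst h2
    have e2 : (fT (u, a, v)).2.1 = a := congrArg (fun p => p.2.1) h2
    have e3 : m0.fS (fT (u, a, v)).2.2 = m1.fS v := congrArg (fun p => p.2.2) h2
    have hu1 : fS u = (fT (u, a, v)).1 :=
      hfS_eq u huC _ (r0.L.src_mem _ h1) e1
    have hv1 : fS v = (fT (u, a, v)).2.2 :=
      hfS_eq v hvC _ (r0.L.tgt_mem _ h1) e3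
    ext
    · exact hu1.symm
    · exact e2
    · exact hv1.symm
  · -- fS injective on context states
    intro u1 hu1 u2 hu2 hfe
    have s1 := hfS_spec u1 hu1
    have s2 := hfS_spec u2 hu2
    replace hfe : fS u1 = fS u2 := hfe
    apply hi1S (hCstates _ hu1) (hCstates _ hu2)
    rw [← s1.2, ← s2.2, hfe]
  · -- fT injective on context transitions
    intro τ1 hτ1 τ2 hτ2 hfe
    have s1 := hfT_spec τ1 hτ1
    have s2 := hfT_spec τ2 hτ2
    replace hfe : fT τ1 = fT τ2 := hfe
    apply hi1T (hCtrans _ hτ1) (hCtrans _ hτ2)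
    rw [← s1.2, ← s2.2, hfe]
end

section
/- If m : L → G is a match of a rule r = (L ← K → R) on G and s is a state of L not in the interface K, then the context LTS of s in L is mapped isomorphically by m onto the context LTS of m(s) in G; in particular there is an injective LTS morphism from C_G(m(s)) to C_L(s). -/
/-- a match maps the context LTS of a non-glue state
isomorphically onto the context LTS of its image; in particular there is an
injective morphism back from the latter to the former. -/
theorem context_bijective_of_match {σ α : Type} (r : LTS.Rule σ α) {G : LTS σ α}
    (m : LTS.Morphism r.L G) (hm : LTS.IsMatch r m)
    (s : σ) (hs : s ∈ r.L.states) (hsK : s ∉ r.K.states) :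
    (∃ f : LTS.Morphism (r.L.contextLTS s) (G.contextLTS (m.fS s)),
       f.Bijective ∧ (∀ x ∈ (r.L.contextLTS s).states, f.fS x = m.fS x) ∧
       (∀ t ∈ (r.L.contextLTS s).trans, f.fT t = m.fT t)) ∧
    (∃ h : LTS.Morphism (G.contextLTS (m.fS s)) (r.L.contextLTS s),
       h.Injective) := by
  classical
  obtain ⟨⟨hinjS, hinjT⟩, hglue⟩ := hm
  obtain ⟨hout, hin⟩ := hglue s hs hsK
  -- context states of s are states of L, context transitions are transitions of L
  have hAsub : (r.L.contextLTS s).states ⊆ r.L.states := by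
    rintro x (rfl | ⟨a, h | h⟩)
    · exact hs
    · exact r.L.tgt_mem _ h
    · exact r.L.src_mem _ h
  have hTsub : (r.L.contextLTS s).trans ⊆ r.L.trans := fun t ht => ht.1
  -- the forward morphism
  have hmapS : ∀ x ∈ (r.L.contextLTS s).states,
      m.fS x ∈ (G.contextLTS (m.fS s)).states := by
    rintro x (rfl | ⟨a, h | h⟩)
    · exact Or.inl rfl
    · refine Or.inr ⟨a, Or.inl ?_⟩
      have h2 := m.maps_trans _ h
      rwa [m.compat _ h] at h2
    · refine Or.inr ⟨a, Or.inr ?_⟩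
      have h2 := m.maps_trans _ h
      rwa [m.compat _ h] at h2
  have hmapT : ∀ t ∈ (r.L.contextLTS s).trans,
      m.fT t ∈ (G.contextLTS (m.fS s)).trans := by
    rintro t ⟨ht, hp | hp⟩
    · exact ⟨m.maps_trans _ ht, Or.inl (by rw [m.compat _ ht, ← hp])⟩
    · exact ⟨m.maps_trans _ ht, Or.inr (by rw [m.compat _ ht, ← hp])⟩
  set F : LTS.Morphism (r.L.contextLTS s) (G.contextLTS (m.fS s)) :=
    { fS := m.fS, fT := m.fT, maps_states := hmapS, maps_trans := hmapT,
      compat := fun t ht => m.compat t (hTsub ht) }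
  -- injectivity on contexts
  have hinjS' : Set.InjOn m.fS (r.L.contextLTS s).states := hinjS.mono hAsub
  have hinjT' : Set.InjOn m.fT (r.L.contextLTS s).trans := hinjT.mono hTsub
  -- surjectivity on states
  have hsurjS : Set.SurjOn m.fS (r.L.contextLTS s).states
      (G.contextLTS (m.fS s)).states := by
    rintro p (rfl | ⟨a, h | h⟩)
    · exact ⟨s, Or.inl rfl, rfl⟩
    · obtain ⟨s', hs', htr, heq⟩ := hout a p h
      exact ⟨s', Or.inr ⟨a, Or.inl htr⟩, heq⟩
    · obtain ⟨s', hs', htr, heq⟩ := hin a p h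
      exact ⟨s', Or.inr ⟨a, Or.inr htr⟩, heq⟩
  -- surjectivity on transitions
  have hsurjT : Set.SurjOn m.fT (r.L.contextLTS s).trans
      (G.contextLTS (m.fS s)).trans := by
    rintro ⟨p1, a, p2⟩ ⟨ht, hp | hp⟩
    · simp only at hp; subst hp
      obtain ⟨s', hs', htr, heq⟩ := hout a p2 ht
      refine ⟨(s, a, s'), ⟨htr, Or.inl rfl⟩, ?_⟩
      rw [m.compat _ htr, heq]
    · simp only at hp; subst hp
      obtain ⟨s', hs', htr, heq⟩ := hin a p1 ht
      refine ⟨(s', a, s), ⟨htr, Or.inr rfl⟩, ?_⟩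
      rw [m.compat _ htr, heq]
  have hbij : F.Bijective :=
    ⟨⟨hmapS, hinjS', hsurjS⟩, ⟨hmapT, hinjT', hsurjT⟩⟩
  refine ⟨⟨F, hbij, fun x _ => rfl, fun t _ => rfl⟩, ?_⟩
  -- the inverse morphism
  set gS : σ → σ := fun p =>
    if h : ∃ x ∈ (r.L.contextLTS s).states, m.fS x = p then h.choose else p with hgS
  set gT : σ × α × σ → σ × α × σ := fun t =>
    if h : ∃ u ∈ (r.L.contextLTS s).trans, m.fT u = t then h.choose else t with hgT
  have hGs : ∀ p ∈ (G.contextLTS (m.fS s)).states,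
      gS p ∈ (r.L.contextLTS s).states ∧ m.fS (gS p) = p := by
    intro p hp
    obtain ⟨x, hx, hxe⟩ := hsurjS hp
    have hex : ∃ x ∈ (r.L.contextLTS s).states, m.fS x = p := ⟨x, hx, hxe⟩
    simp only [hgS, dif_pos hex]
    exact ⟨hex.choose_spec.1, hex.choose_spec.2⟩
  have hGt : ∀ t ∈ (G.contextLTS (m.fS s)).trans,
      gT t ∈ (r.L.contextLTS s).trans ∧ m.fT (gT t) = t := by
    intro t ht
    obtain ⟨u, hu, hue⟩ := hsurjT ht
    have hex : ∃ u ∈ (r.L.contextLTS s).trans, m.fT u = t := ⟨u, hu, hue⟩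
    simp only [hgT, dif_pos hex]
    exact ⟨hex.choose_spec.1, hex.choose_spec.2⟩
  have hleft : ∀ x ∈ (r.L.contextLTS s).states, gS (m.fS x) = x := by
    intro x hx
    have hex : ∃ y ∈ (r.L.contextLTS s).states, m.fS y = m.fS x := ⟨x, hx, rfl⟩
    simp only [hgS, dif_pos hex]
    exact hinjS' hex.choose_spec.1 hx hex.choose_spec.2
  refine ⟨{ fS := gS, fT := gT,
            maps_states := fun p hp => (hGs p hp).1,
            maps_trans := fun t ht => (hGt t ht).1,
            compat := ?_ }, ?_, ?_⟩
  · intro t ht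
    obtain ⟨hu, heq⟩ := hGt t ht
    set u := gT t with hu'
    have hc := m.compat u (hTsub hu)
    have h1 : u.1 ∈ (r.L.contextLTS s).states := (r.L.contextLTS s).src_mem u hu
    have h2 : u.2.2 ∈ (r.L.contextLTS s).states := (r.L.contextLTS s).tgt_mem u hu
    have e1 : gS t.1 = u.1 := by
      rw [← heq, hc]; exact hleft _ h1
    have e2 : gS t.2.2 = u.2.2 := by
      rw [← heq, hc]; exact hleft _ h2
    have e3 : t.2.1 = u.2.1 := by rw [← heq, hc]
    rw [e1, e2, e3]
  · intro p1 h1 p2 h2 he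
    have he' : gS p1 = gS p2 := he
    have := (hGs p1 h1).2
    rw [he', (hGs p2 h2).2] at this
    exact this.symm
  · intro t1 h1 t2 h2 he
    have he' : gT t1 = gT t2 := he
    have := (hGt t1 h1).2
    rw [he', (hGt t2 h2).2] at this
    exact this.symm
end

section
/- Let f : L^{r0} → L^{r1} be a partial injective LTS morphism and suppose s, t are states with f_S(s) = t, where s is a non-glue state of r0 (s ∈ S_{L^{r0}} \ S_{K^{r0}}) and f satisfies the conflict-compatibility condition for this pair: every transition of L^{r1} incident to t is the f-image of a transition of L^{r0} incident to s. Then there is an injective LTS morphism from the context LTS C_{L^{r1}}(t) to the context LTS C_{L^{r0}}(s) sending t to s. -/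
/-- a conflict-compatibility pair (s non-glue) yields an
injective morphism between the corresponding context LTSs. -/
theorem context_morphism_of_conflict_compatible {σ α : Type}
    (r0 r1 : LTS.Rule σ α) (f : LTS.PartialMorphism r0.L r1.L)
    (hf : f.Injective) (s t : σ)
    (hs : s ∈ r0.L.states) (hsK : s ∉ r0.K.states) (ht : t ∈ r1.L.states)
    (hst : f.fS s = some t)
    (hcc : ∀ u ∈ r1.L.trans, (u.1 = t ∨ u.2.2 = t) →
      ∃ v ∈ r0.L.trans, (v.1 = s ∨ v.2.2 = s) ∧ f.fT v = some u) :
    ∃ h : LTS.Morphism (r1.L.contextLTS t) (r0.L.contextLTS s),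
      h.Injective ∧ h.fS t = s := by
  classical
  let gS : σ → σ := fun x =>
    if h : ∃ y, y ∈ r0.L.states ∧ f.fS y = some x then h.choose else s
  let gT : σ × α × σ → σ × α × σ := fun u =>
    if h : ∃ v, v ∈ r0.L.trans ∧ (v.1 = s ∨ v.2.2 = s) ∧ f.fT v = some u then h.choose else u
  have hgSspec : ∀ x (h : ∃ y, y ∈ r0.L.states ∧ f.fS y = some x),
      gS x ∈ r0.L.states ∧ f.fS (gS x) = some x := by
    intro x h
    simpa only [gS, dif_pos h] using h.choose_spec
  have hgSuniq : ∀ x y, y ∈ r0.L.states → f.fS y = some x → gS x = y := by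
    intro x y hy hfy
    have h : ∃ y, y ∈ r0.L.states ∧ f.fS y = some x := ⟨y, hy, hfy⟩
    obtain ⟨h1, h2⟩ := hgSspec x h
    exact hf.1 _ h1 _ hy (by simp [h2]) (by rw [h2, hfy])
  have hgSt : gS t = s := hgSuniq t s hs hst
  have hstates : ∀ x ∈ (r1.L.contextLTS t).states,
      gS x ∈ (r0.L.contextLTS s).states ∧ f.fS (gS x) = some x := by
    intro x hx
    simp only [LTS.contextLTS, Set.mem_union, Set.mem_singleton_iff,
      Set.mem_setOf_eq] at hx ⊢
    rcases hx with rfl | ⟨a, hx | hx⟩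
    · exact ⟨Or.inl hgSt, by rw [hgSt]; exact hst⟩
    · obtain ⟨v, hv, hvs, hfv⟩ := hcc (t, a, x) hx (Or.inl rfl)
      obtain ⟨_, h1, h2, h3⟩ := f.compat v hv _ hfv
      have hx2 : gS x = v.2.2 := hgSuniq x v.2.2 (r0.L.tgt_mem v hv) h2
      refine ⟨?_, by rw [hx2]; exact h2⟩
      rw [hx2]
      rcases hvs with hvs | hvs
      · exact Or.inr ⟨v.2.1, Or.inl (by rw [← hvs]; exact hv)⟩
      · exact Or.inl hvs
    · obtain ⟨v, hv, hvs, hfv⟩ := hcc (x, a, t) hx (Or.inr rfl)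
      obtain ⟨_, h1, h2, h3⟩ := f.compat v hv _ hfv
      have hx1 : gS x = v.1 := hgSuniq x v.1 (r0.L.src_mem v hv) h1
      refine ⟨?_, by rw [hx1]; exact h1⟩
      rw [hx1]
      rcases hvs with hvs | hvs
      · exact Or.inl hvs
      · exact Or.inr ⟨v.2.1, Or.inr (by rw [← hvs]; exact hv)⟩
  have htrans : ∀ u ∈ (r1.L.contextLTS t).trans,
      gT u ∈ (r0.L.contextLTS s).trans ∧ f.fT (gT u) = some u := by
    intro u hu
    obtain ⟨hu1, hu2⟩ := hu
    obtain ⟨v, hv, hvs, hfv⟩ := hcc u hu1 hu2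
    have h : ∃ v, v ∈ r0.L.trans ∧ (v.1 = s ∨ v.2.2 = s) ∧ f.fT v = some u :=
      ⟨v, hv, hvs, hfv⟩
    have hspec := h.choose_spec
    simp only [gT, dif_pos h]
    exact ⟨⟨hspec.1, hspec.2.1⟩, hspec.2.2⟩
  refine ⟨⟨gS, gT, fun x hx => (hstates x hx).1, fun u hu => (htrans u hu).1, ?_⟩, ?_, hgSt⟩
  · -- compat
    intro u hu
    obtain ⟨hmem', hfu⟩ := htrans u hu
    have hmem : gT u ∈ r0.L.trans := hmem'.1
    obtain ⟨_, h1, h2, h3⟩ := f.compat (gT u) hmem _ hfu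
    have e1 : gS u.1 = (gT u).1 := hgSuniq _ _ (r0.L.src_mem _ hmem) h1
    have e2 : gS u.2.2 = (gT u).2.2 := hgSuniq _ _ (r0.L.tgt_mem _ hmem) h2
    rw [e1, e2, h3]
  · constructor
    · intro x1 hx1 x2 hx2 heq
      have heq' : gS x1 = gS x2 := heq
      have e1 := (hstates x1 hx1).2
      have e2 := (hstates x2 hx2).2
      rw [heq', e2] at e1
      exact (Option.some.injEq _ _ ▸ e1).symm
    · intro u1 hu1 u2 hu2 heq
      have heq' : gT u1 = gT u2 := heq
      have e1 := (htrans u1 hu1).2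
      have e2 := (htrans u2 hu2).2
      rw [heq', e2] at e1
      exact (Option.some.injEq _ _ ▸ e1).symm
end
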